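/- arXiv:2307.09864 — 3 statements merged into one kernel-verified Lean document; each statement's English description precedes it below -/
import Mathlib

section
/- Let r ≥ 1 be a fixed integer, let Σ_Λ and Γ^F be r × r real symmetric positive definite matrices, and for each integer n ≥ r let Λ_n be a real n × r matrix. Assume lim_{n→∞} ‖ (Λ_nᵀ Λ_n)/n − Σ_Λ ‖ = 0, where ‖·‖ is the spectral (operator) norm. Then for every j ∈ {1,…,r}: liminf_{n→∞} μ_j(Λ_n Γ^F Λ_nᵀ)/n ≥ μ_r(Σ_Λ) · μ_j(Γ^F) > 0 and limsup_{n→∞} μ_j(Λ_n Γ^F Λ_nᵀ)/n ≤ μ_j(Σ_Λ) · μ_1(Γ^F) < ∞, where μ_j(A) denotes the j-th largest eigenvalue of a real symmetric matrix A (eigenvalues counted with multiplicity, sorted in decreasing order). -/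
open Matrix Filter

/-- The spectral (operator) norm of a real matrix, i.e. the operator norm of the
induced linear map between Euclidean spaces. -/
noncomputable def specNorm {m n : ℕ} (A : Matrix (Fin m) (Fin n) ℝ) : ℝ :=
  ‖LinearMap.toContinuousLinearMap (Matrix.toEuclideanLin A)‖

/-- `muNth A j` is the `j`-th largest eigenvalue (1-indexed, counted with multiplicity)
of a real symmetric matrix `A` (junk value `0` if `A` is not symmetric or `j` out of range). -/
noncomputable def muNth {n : ℕ} (A : Matrix (Fin n) (Fin n) ℝ) (j : ℕ) : ℝ :=
  (if hA : A.IsHermitian then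
    (List.ofFn hA.eigenvalues).mergeSort (fun a b => decide (b ≤ a))
  else []).getD (j - 1) 0

/-!
Write `Γ^F = B * B` with `B` symmetric. Since `X Xᵀ` and `Xᵀ X` have the same top eigenvalues,
`μ_j(Λₙ Γ^F Λₙᵀ) / n = μ_j(B (Λₙᵀ Λₙ / n) B)`, and by Weyl's inequality
`|μ_j(A) - μ_j(A')| ≤ ‖A - A'‖` this converges to `μ_j(B Σ_Λ B)`. By the Courant–Fischer
principle, eigenvalues are monotone in the quadratic form: `⟪B Σ_Λ B x, x⟫ ≥ μ_r(Σ_Λ) ⟪Γ^F x, x⟫`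
gives the lower bound, and writing `Σ_Λ = C * C`, the matrix `B Σ_Λ B = (C B)ᵀ (C B)` shares its top
eigenvalues with `C Γ^F C`, whose form is at most `μ_1(Γ^F) ⟪Σ_Λ x, x⟫`.
-/

open Module
open scoped RealInnerProductSpace

theorem Submodule.exists_mem_inf_ne_zero_of_lt_finrank_add {K V : Type*} [DivisionRing K]
    [AddCommGroup V] [Module K V] [FiniteDimensional K V] {U W : Submodule K V}
    (h : finrank K V < finrank K U + finrank K W) : ∃ x ∈ U, x ∈ W ∧ x ≠ 0 := by
  have hsup : finrank K ↥(U ⊔ W) ≤ finrank K V := Submodule.finrank_le _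
  have hinf : U ⊓ W ≠ ⊥ := by
    intro hbot
    have := Submodule.finrank_sup_add_finrank_inf_eq U W
    rw [hbot, finrank_bot] at this
    omega
  obtain ⟨x, hx, hx0⟩ := Submodule.exists_mem_ne_zero_of_ne_bot hinf
  exact ⟨x, hx.1, hx.2, hx0⟩

theorem Submodule.finrank_map_eq_of_disjoint_ker {R M N : Type*} [Ring R] [AddCommGroup M]
    [Module R M] [AddCommGroup N] [Module R N] {f : M →ₗ[R] N} {p : Submodule R M}
    (h : Disjoint p (LinearMap.ker f)) : finrank R (p.map f) = finrank R p := by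
  rw [← LinearMap.range_domRestrict, LinearMap.finrank_range_of_inj]
  exact fun a b hab => Subtype.ext (LinearMap.disjoint_ker_iff_injOn.mp h a.2 b.2 hab)

theorem OrthonormalBasis.norm_sq_eq_sum_repr_sq {ι E : Type*} [Fintype ι] [NormedAddCommGroup E]
    [InnerProductSpace ℝ E] (b : OrthonormalBasis ι ℝ E) (x : E) :
    ‖x‖ ^ 2 = ∑ i, b.repr x i ^ 2 := by
  rw [← b.repr.norm_map, EuclideanSpace.real_norm_sq_eq]

namespace OrthonormalBasis

variable {ι 𝕜 E : Type*} [Fintype ι] [RCLike 𝕜] [NormedAddCommGroup E] [InnerProductSpace 𝕜 E]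

theorem repr_eq_zero_of_mem_span_image (b : OrthonormalBasis ι 𝕜 E) {s : Set ι} {x : E}
    (hx : x ∈ Submodule.span 𝕜 (b '' s)) {i : ι} (hi : i ∉ s) : b.repr x i = 0 := by
  rw [← b.coe_toBasis, Module.Basis.mem_span_image] at hx
  rw [← b.coe_toBasis_repr_apply]
  exact Finsupp.notMem_support_iff.mp fun h => hi (hx h)

theorem finrank_span_image (b : OrthonormalBasis ι 𝕜 E) (s : Finset ι) :
    finrank 𝕜 (Submodule.span 𝕜 (b '' s)) = s.card := by
  have himage : b '' s = Set.range fun i : {i // i ∈ s} => b i := Set.image_eq_range _ _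
  have hli : LinearIndependent 𝕜 fun i : {i // i ∈ s} => b i :=
    b.orthonormal.linearIndependent.comp _ Subtype.coe_injective
  rw [himage, finrank_span_eq_card hli, Fintype.card_coe]

end OrthonormalBasis

namespace LinearMap.IsSymmetric

variable {E : Type*} [NormedAddCommGroup E] [InnerProductSpace ℝ E] [FiniteDimensional ℝ E]
  {S T : E →ₗ[ℝ] E} {n : ℕ}

theorem eigenvalues_eq_of_eq (hS : S.IsSymmetric) (hT : T.IsSymmetric) (h : S = T) {m : ℕ}
    (hn : finrank ℝ E = n) (hm : finrank ℝ E = m) {k : ℕ} (hkn : k < n) (hkm : k < m) :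
    hS.eigenvalues hn ⟨k, hkn⟩ = hT.eigenvalues hm ⟨k, hkm⟩ := by
  subst h hn hm
  rfl

theorem inner_apply_self_eq_sum (hT : T.IsSymmetric) (hn : finrank ℝ E = n) (x : E) :
    ⟪T x, x⟫ = ∑ i, hT.eigenvalues hn i * (hT.eigenvectorBasis hn).repr x i ^ 2 := by
  rw [← (hT.eigenvectorBasis hn).repr.inner_map_map, PiLp.inner_apply]
  refine Finset.sum_congr rfl fun i _ => ?_
  simp only [hT.eigenvectorBasis_apply_self_apply, RCLike.inner_apply, conj_trivial,
    RCLike.ofReal_real_eq_id, id_eq]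
  ring

theorem mul_norm_sq_le_inner_of_repr_eq_zero (hT : T.IsSymmetric) (hn : finrank ℝ E = n)
    {s : Set (Fin n)} {m : ℝ} (hm : ∀ i ∈ s, m ≤ hT.eigenvalues hn i) {x : E}
    (hx : ∀ i ∉ s, (hT.eigenvectorBasis hn).repr x i = 0) :
    m * ‖x‖ ^ 2 ≤ ⟪T x, x⟫ := by
  rw [hT.inner_apply_self_eq_sum hn, (hT.eigenvectorBasis hn).norm_sq_eq_sum_repr_sq,
    Finset.mul_sum]
  refine Finset.sum_le_sum fun i _ => ?_
  by_cases hi : i ∈ s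
  · exact mul_le_mul_of_nonneg_right (hm i hi) (sq_nonneg _)
  · simp [hx i hi]

theorem inner_le_mul_norm_sq_of_repr_eq_zero (hT : T.IsSymmetric) (hn : finrank ℝ E = n)
    {s : Set (Fin n)} {m : ℝ} (hm : ∀ i ∈ s, hT.eigenvalues hn i ≤ m) {x : E}
    (hx : ∀ i ∉ s, (hT.eigenvectorBasis hn).repr x i = 0) :
    ⟪T x, x⟫ ≤ m * ‖x‖ ^ 2 := by
  rw [hT.inner_apply_self_eq_sum hn, (hT.eigenvectorBasis hn).norm_sq_eq_sum_repr_sq,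
    Finset.mul_sum]
  refine Finset.sum_le_sum fun i _ => ?_
  by_cases hi : i ∈ s
  · exact mul_le_mul_of_nonneg_right (hm i hi) (sq_nonneg _)
  · simp [hx i hi]

theorem exists_finrank_eq_eigenvalues_mul_le_inner (hT : T.IsSymmetric) (hn : finrank ℝ E = n)
    (k : Fin n) :
    ∃ V : Submodule ℝ E, finrank ℝ V = k + 1 ∧
      ∀ x ∈ V, hT.eigenvalues hn k * ‖x‖ ^ 2 ≤ ⟪T x, x⟫ := by
  set b := hT.eigenvectorBasis hn
  refine ⟨Submodule.span ℝ (b '' (Finset.Iic k : Finset (Fin n))), ?_, fun x hx => ?_⟩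
  · rw [b.finrank_span_image, Fin.card_Iic]
  · exact hT.mul_norm_sq_le_inner_of_repr_eq_zero hn
      (fun i hi => hT.eigenvalues_antitone hn (Finset.mem_Iic.mp hi))
      fun i hi => b.repr_eq_zero_of_mem_span_image hx hi

theorem exists_ne_zero_inner_le_eigenvalues_mul (hT : T.IsSymmetric) (hn : finrank ℝ E = n)
    (k : Fin n) {V : Submodule ℝ E} (hV : finrank ℝ V = k + 1) :
    ∃ x ∈ V, x ≠ 0 ∧ ⟪T x, x⟫ ≤ hT.eigenvalues hn k * ‖x‖ ^ 2 := by
  set b := hT.eigenvectorBasis hn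
  set W := Submodule.span ℝ (b '' (Finset.Ici k : Finset (Fin n)))
  have hW : finrank ℝ W = n - k := by rw [b.finrank_span_image, Fin.card_Ici]
  obtain ⟨x, hxV, hxW, hx0⟩ := Submodule.exists_mem_inf_ne_zero_of_lt_finrank_add
    (U := V) (W := W) (by omega)
  exact ⟨x, hxV, hx0, hT.inner_le_mul_norm_sq_of_repr_eq_zero hn
    (fun i hi => hT.eigenvalues_antitone hn (Finset.mem_Ici.mp hi))
    fun i hi => b.repr_eq_zero_of_mem_span_image hxW hi⟩

theorem mul_eigenvalues_add_le_eigenvalues (hS : S.IsSymmetric) (hT : T.IsSymmetric)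
    (hn : finrank ℝ E = n) {c d : ℝ} (hc : 0 ≤ c)
    (h : ∀ x, c * ⟪S x, x⟫ + d * ‖x‖ ^ 2 ≤ ⟪T x, x⟫) (k : Fin n) :
    c * hS.eigenvalues hn k + d ≤ hT.eigenvalues hn k := by
  obtain ⟨V, hV, hSV⟩ := hS.exists_finrank_eq_eigenvalues_mul_le_inner hn k
  obtain ⟨x, hxV, hx0, hTx⟩ := hT.exists_ne_zero_inner_le_eigenvalues_mul hn k hV
  have hx : 0 < ‖x‖ ^ 2 := by positivity
  refine le_of_mul_le_mul_right ?_ hx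
  calc (c * hS.eigenvalues hn k + d) * ‖x‖ ^ 2
      = c * (hS.eigenvalues hn k * ‖x‖ ^ 2) + d * ‖x‖ ^ 2 := by ring
    _ ≤ c * ⟪S x, x⟫ + d * ‖x‖ ^ 2 := by gcongr; exact hSV x hxV
    _ ≤ ⟪T x, x⟫ := h x
    _ ≤ hT.eigenvalues hn k * ‖x‖ ^ 2 := hTx

theorem eigenvalues_le_mul_eigenvalues_add (hS : S.IsSymmetric) (hT : T.IsSymmetric)
    (hn : finrank ℝ E = n) {c d : ℝ} (hc : 0 ≤ c)
    (h : ∀ x, ⟪T x, x⟫ ≤ c * ⟪S x, x⟫ + d * ‖x‖ ^ 2) (k : Fin n) :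
    hT.eigenvalues hn k ≤ c * hS.eigenvalues hn k + d := by
  obtain ⟨V, hV, hTV⟩ := hT.exists_finrank_eq_eigenvalues_mul_le_inner hn k
  obtain ⟨x, hxV, hx0, hSx⟩ := hS.exists_ne_zero_inner_le_eigenvalues_mul hn k hV
  have hx : 0 < ‖x‖ ^ 2 := by positivity
  refine le_of_mul_le_mul_right ?_ hx
  calc hT.eigenvalues hn k * ‖x‖ ^ 2
      ≤ ⟪T x, x⟫ := hTV x hxV
    _ ≤ c * ⟪S x, x⟫ + d * ‖x‖ ^ 2 := h x
    _ ≤ c * (hS.eigenvalues hn k * ‖x‖ ^ 2) + d * ‖x‖ ^ 2 := by gcongr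
    _ = (c * hS.eigenvalues hn k + d) * ‖x‖ ^ 2 := by ring

theorem eigenvalues_last_mul_norm_sq_le_inner (hT : T.IsSymmetric) (hn : finrank ℝ E = n + 1)
    (x : E) : hT.eigenvalues hn (Fin.last n) * ‖x‖ ^ 2 ≤ ⟪T x, x⟫ :=
  hT.mul_norm_sq_le_inner_of_repr_eq_zero hn (s := Set.univ)
    (fun i _ => hT.eigenvalues_antitone hn (Fin.le_last i)) fun _ hi => absurd trivial hi

theorem inner_le_eigenvalues_zero_mul_norm_sq (hT : T.IsSymmetric) (hn : finrank ℝ E = n + 1)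
    (x : E) : ⟪T x, x⟫ ≤ hT.eigenvalues hn 0 * ‖x‖ ^ 2 :=
  hT.inner_le_mul_norm_sq_of_repr_eq_zero hn (s := Set.univ)
    (fun i _ => hT.eigenvalues_antitone hn (Fin.zero_le i)) fun _ hi => absurd trivial hi

end LinearMap.IsSymmetric

namespace LinearMap

variable {E F : Type*} [NormedAddCommGroup E] [InnerProductSpace ℝ E] [FiniteDimensional ℝ E]
  [NormedAddCommGroup F] [InnerProductSpace ℝ F] [FiniteDimensional ℝ F] {n m : ℕ}

theorem eigenvalues_adjoint_comp_self_le (T : E →ₗ[ℝ] F) (hn : finrank ℝ E = n)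
    (hm : finrank ℝ F = m) {k : ℕ} (hkn : k < n) (hkm : k < m) :
    T.isSymmetric_adjoint_comp_self.eigenvalues hn ⟨k, hkn⟩ ≤
      T.isSymmetric_self_comp_adjoint.eigenvalues hm ⟨k, hkm⟩ := by
  -- `T` is injective on a `(k+1)`-space `V` where `‖T x‖² ≥ μ ‖x‖²`, and by Cauchy–Schwarz
  -- `‖T† y‖² ≥ μ ‖y‖²` for `y` in the `(k+1)`-space `T V`.
  set μ := T.isSymmetric_adjoint_comp_self.eigenvalues hn ⟨k, hkn⟩
  rcases le_or_gt μ 0 with hμ | hμ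
  · exact hμ.trans (T.isPositive_self_comp_adjoint.nonneg_eigenvalues hm _)
  obtain ⟨V, hV, hμV⟩ :=
    T.isSymmetric_adjoint_comp_self.exists_finrank_eq_eigenvalues_mul_le_inner hn ⟨k, hkn⟩
  have hμV' : ∀ x ∈ V, μ * ‖x‖ ^ 2 ≤ ‖T x‖ ^ 2 := fun x hx => by
    simpa [adjoint_inner_left, real_inner_self_eq_norm_sq] using hμV x hx
  have hdisj : Disjoint V (ker T) := disjoint_ker.mpr fun x hx hTx => by
    have := hμV' x hx
    rw [hTx, norm_zero] at this
    exact norm_eq_zero.mp (pow_eq_zero_iff two_ne_zero |>.mp (by nlinarith [sq_nonneg ‖x‖]))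
  obtain ⟨y, hyW, hy0, hy⟩ :=
    T.isSymmetric_self_comp_adjoint.exists_ne_zero_inner_le_eigenvalues_mul hm ⟨k, hkm⟩
      (V := V.map T) (by rw [Submodule.finrank_map_eq_of_disjoint_ker hdisj, hV])
  obtain ⟨x, hxV, rfl⟩ := Submodule.mem_map.mp hyW
  have hquad : ⟪(T ∘ₗ adjoint T) (T x), T x⟫ = ‖adjoint T (T x)‖ ^ 2 := by
    rw [comp_apply, ← adjoint_inner_right, real_inner_self_eq_norm_sq]
  have hcs : ‖T x‖ ^ 2 ≤ ‖adjoint T (T x)‖ * ‖x‖ := by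
    rw [← real_inner_self_eq_norm_sq, ← adjoint_inner_left]
    exact real_inner_le_norm _ _
  have hTx : 0 < ‖T x‖ ^ 2 := by positivity
  have hμTx : μ * ‖T x‖ ^ 2 ≤ ‖adjoint T (T x)‖ ^ 2 := by
    refine le_of_mul_le_mul_left ?_ hTx
    have hsq := pow_le_pow_left₀ (sq_nonneg _) hcs 2
    have hμx := mul_le_mul_of_nonneg_right (hμV' x hxV) (sq_nonneg ‖adjoint T (T x)‖)
    nlinarith
  exact le_of_mul_le_mul_right ((hμTx.trans_eq hquad.symm).trans hy) hTx

theorem eigenvalues_adjoint_comp_self (T : E →ₗ[ℝ] F) (hn : finrank ℝ E = n)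
    (hm : finrank ℝ F = m) {k : ℕ} (hkn : k < n) (hkm : k < m) :
    T.isSymmetric_adjoint_comp_self.eigenvalues hn ⟨k, hkn⟩ =
      T.isSymmetric_self_comp_adjoint.eigenvalues hm ⟨k, hkm⟩ := by
  refine (T.eigenvalues_adjoint_comp_self_le hn hm hkn hkm).antisymm ?_
  have := (adjoint T).eigenvalues_adjoint_comp_self_le hm hn hkm hkn
  simpa only [adjoint_adjoint] using this

end LinearMap

namespace Matrix

open scoped Matrix.Norms.L2Operator

variable {n m : ℕ}

theorem muNth_succ_eq_getD_eigenvalues₀ {A : Matrix (Fin n) (Fin n) ℝ} (hA : A.IsHermitian)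
    (k : ℕ) : muNth A (k + 1) = (List.ofFn hA.eigenvalues₀).getD k 0 := by
  rw [muNth, dif_pos hA]
  congr 1
  have hperm : (List.ofFn hA.eigenvalues).Perm (List.ofFn hA.eigenvalues₀) := by
    have : hA.eigenvalues =
        hA.eigenvalues₀ ∘ (Fintype.equivOfCardEq (Fintype.card_fin _)).symm := rfl
    rw [← Multiset.coe_eq_coe, ← Fin.univ_val_map, ← Fin.univ_val_map, this,
      ← Multiset.map_map, Multiset.map_univ_val_equiv]
  exact ((List.mergeSort_perm _ _).trans hperm).eq_of_pairwise' (List.pairwise_mergeSort' _ _)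
    hA.eigenvalues₀_antitone.sortedGE_ofFn.pairwise

theorem muNth_succ_eq_eigenvalues {A : Matrix (Fin n) (Fin n) ℝ} (hA : A.IsHermitian)
    (k : Fin n) :
    muNth A (k + 1) =
      (isSymmetric_toEuclideanLin_iff.mpr hA).eigenvalues finrank_euclideanSpace_fin k := by
  rw [muNth_succ_eq_getD_eigenvalues₀ hA, List.getD_eq_getElem _ _ (by simp), List.getElem_ofFn]
  exact LinearMap.IsSymmetric.eigenvalues_eq_of_eq _ _ rfl _ _ _ _

theorem exists_muNth_succ_eq_eigenvalues {A : Matrix (Fin n) (Fin n) ℝ} (hA : A.IsHermitian)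
    (k : Fin n) : ∃ i, muNth A (k + 1) = hA.eigenvalues i := by
  rw [muNth_succ_eq_getD_eigenvalues₀ hA, List.getD_eq_getElem _ _ (by simp), List.getElem_ofFn]
  exact ⟨Fintype.equivOfCardEq (Fintype.card_fin _) ⟨k, by simp⟩, by simp [IsHermitian.eigenvalues]⟩

theorem muNth_nonneg {A : Matrix (Fin n) (Fin n) ℝ} (hA : A.PosSemidef) (k : Fin n) :
    0 ≤ muNth A (k + 1) := by
  obtain ⟨i, hi⟩ := exists_muNth_succ_eq_eigenvalues hA.isHermitian k
  exact hi ▸ hA.eigenvalues_nonneg i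

theorem muNth_pos {A : Matrix (Fin n) (Fin n) ℝ} (hA : A.PosDef) (k : Fin n) :
    0 < muNth A (k + 1) := by
  obtain ⟨i, hi⟩ := exists_muNth_succ_eq_eigenvalues hA.isHermitian k
  exact hi ▸ hA.eigenvalues_pos i

theorem toEuclideanLin_transpose (M : Matrix (Fin m) (Fin n) ℝ) :
    toEuclideanLin Mᵀ = LinearMap.adjoint (toEuclideanLin M) := by
  rw [← conjTranspose_eq_transpose_of_trivial, toEuclideanLin_conjTranspose_eq_adjoint]

theorem inner_toEuclideanLin_transpose_mul_mul (M : Matrix (Fin m) (Fin n) ℝ)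
    (A : Matrix (Fin m) (Fin m) ℝ) (x : EuclideanSpace ℝ (Fin n)) :
    ⟪toEuclideanLin (Mᵀ * A * M) x, x⟫ =
      ⟪toEuclideanLin A (toEuclideanLin M x), toEuclideanLin M x⟫ := by
  simp only [toLpLin_mul_same, LinearMap.comp_apply, toEuclideanLin_transpose,
    LinearMap.adjoint_inner_left]

theorem inner_toEuclideanLin_transpose_mul_self (M : Matrix (Fin m) (Fin n) ℝ)
    (x : EuclideanSpace ℝ (Fin n)) : ⟪toEuclideanLin (Mᵀ * M) x, x⟫ = ‖toEuclideanLin M x‖ ^ 2 := by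
  simp only [toLpLin_mul_same, LinearMap.comp_apply, toEuclideanLin_transpose,
    LinearMap.adjoint_inner_left, real_inner_self_eq_norm_sq]

theorem inner_toEuclideanLin_le_norm_mul (A : Matrix (Fin n) (Fin n) ℝ)
    (x : EuclideanSpace ℝ (Fin n)) : ⟪toEuclideanLin A x, x⟫ ≤ ‖A‖ * ‖x‖ ^ 2 :=
  calc ⟪toEuclideanLin A x, x⟫
      ≤ ‖toEuclideanLin A x‖ * ‖x‖ := real_inner_le_norm _ _
    _ ≤ ‖A‖ * ‖x‖ * ‖x‖ := by gcongr; exact (toEuclideanCLM (𝕜 := ℝ) A).le_opNorm x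
    _ = ‖A‖ * ‖x‖ ^ 2 := by ring

section Comparison

variable {A B : Matrix (Fin n) (Fin n) ℝ}

theorem mul_muNth_add_le_muNth (hA : A.IsHermitian) (hB : B.IsHermitian) {c d : ℝ} (hc : 0 ≤ c)
    (h : ∀ x, c * ⟪toEuclideanLin A x, x⟫ + d * ‖x‖ ^ 2 ≤ ⟪toEuclideanLin B x, x⟫) (k : Fin n) :
    c * muNth A (k + 1) + d ≤ muNth B (k + 1) := by
  rw [muNth_succ_eq_eigenvalues hA, muNth_succ_eq_eigenvalues hB]
  exact LinearMap.IsSymmetric.mul_eigenvalues_add_le_eigenvalues _ _ _ hc h k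

theorem muNth_le_mul_muNth_add (hA : A.IsHermitian) (hB : B.IsHermitian) {c d : ℝ} (hc : 0 ≤ c)
    (h : ∀ x, ⟪toEuclideanLin B x, x⟫ ≤ c * ⟪toEuclideanLin A x, x⟫ + d * ‖x‖ ^ 2) (k : Fin n) :
    muNth B (k + 1) ≤ c * muNth A (k + 1) + d := by
  rw [muNth_succ_eq_eigenvalues hA, muNth_succ_eq_eigenvalues hB]
  exact LinearMap.IsSymmetric.eigenvalues_le_mul_eigenvalues_add _ _ _ hc h k

theorem muNth_smul (hA : A.IsHermitian) {c : ℝ} (hc : 0 ≤ c) (k : Fin n) :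
    muNth (c • A) (k + 1) = c * muNth A (k + 1) := by
  have hcA : (c • A).IsHermitian := hA.smul (IsSelfAdjoint.all c)
  have h x : ⟪toEuclideanLin (c • A) x, x⟫ = c * ⟪toEuclideanLin A x, x⟫ := by
    rw [map_smul, LinearMap.smul_apply, real_inner_smul_left]
  refine le_antisymm ?_ ?_
  · simpa using muNth_le_mul_muNth_add hA hcA hc (d := 0) (fun x => by rw [h, zero_mul, add_zero]) k
  · simpa using mul_muNth_add_le_muNth hA hcA hc (d := 0) (fun x => by rw [h, zero_mul, add_zero]) k

theorem muNth_le_muNth_add_norm_sub (hA : A.IsHermitian) (hB : B.IsHermitian) (k : Fin n) :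
    muNth A (k + 1) ≤ muNth B (k + 1) + ‖A - B‖ := by
  refine (one_mul (muNth B (k + 1))).symm ▸ muNth_le_mul_muNth_add hB hA zero_le_one (fun x => ?_) k
  have := inner_toEuclideanLin_le_norm_mul (A - B) x
  rw [map_sub, LinearMap.sub_apply, inner_sub_left] at this
  linarith

theorem abs_muNth_sub_muNth_le (hA : A.IsHermitian) (hB : B.IsHermitian) (k : Fin n) :
    |muNth A (k + 1) - muNth B (k + 1)| ≤ ‖A - B‖ := by
  have h₁ := muNth_le_muNth_add_norm_sub hA hB k
  have h₂ := muNth_le_muNth_add_norm_sub hB hA k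
  rw [norm_sub_rev] at h₂
  exact abs_sub_le_iff.mpr ⟨by linarith, by linarith⟩

theorem tendsto_muNth {ι : Type*} {l : Filter ι} {A : ι → Matrix (Fin n) (Fin n) ℝ}
    {A₀ : Matrix (Fin n) (Fin n) ℝ} (hA : ∀ i, (A i).IsHermitian) (hA₀ : A₀.IsHermitian)
    (h : Tendsto A l (nhds A₀)) (k : Fin n) :
    Tendsto (fun i => muNth (A i) (k + 1)) l (nhds (muNth A₀ (k + 1))) := by
  rw [tendsto_iff_norm_sub_tendsto_zero] at h ⊢
  exact squeeze_zero_norm (fun i => by simpa using abs_muNth_sub_muNth_le (hA i) hA₀ k) h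

end Comparison

theorem muNth_mul_transpose_self (M : Matrix (Fin m) (Fin n) ℝ) {k : ℕ} (hkm : k < m)
    (hkn : k < n) : muNth (M * Mᵀ) (k + 1) = muNth (Mᵀ * M) (k + 1) := by
  have h₁ : (M * Mᵀ).IsHermitian := by
    simpa [conjTranspose_eq_transpose_of_trivial] using isHermitian_mul_conjTranspose_self M
  have h₂ : (Mᵀ * M).IsHermitian := by
    simpa [conjTranspose_eq_transpose_of_trivial] using isHermitian_conjTranspose_mul_self M
  rw [muNth_succ_eq_eigenvalues h₁ ⟨k, hkm⟩, muNth_succ_eq_eigenvalues h₂ ⟨k, hkn⟩]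
  calc _ = (toEuclideanLin M).isSymmetric_self_comp_adjoint.eigenvalues
        finrank_euclideanSpace_fin ⟨k, hkm⟩ :=
        LinearMap.IsSymmetric.eigenvalues_eq_of_eq _ _
          (by rw [toLpLin_mul_same, toEuclideanLin_transpose]) _ _ _ _
    _ = (toEuclideanLin M).isSymmetric_adjoint_comp_self.eigenvalues
        finrank_euclideanSpace_fin ⟨k, hkn⟩ :=
        (LinearMap.eigenvalues_adjoint_comp_self _ _ _ hkn hkm).symm
    _ = _ := LinearMap.IsSymmetric.eigenvalues_eq_of_eq _ _
          (by rw [toLpLin_mul_same, toEuclideanLin_transpose]) _ _ _ _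

theorem muNth_last_mul_norm_sq_le_inner {A : Matrix (Fin (n + 1)) (Fin (n + 1)) ℝ}
    (hA : A.IsHermitian) (x : EuclideanSpace ℝ (Fin (n + 1))) :
    muNth A (n + 1) * ‖x‖ ^ 2 ≤ ⟪toEuclideanLin A x, x⟫ := by
  have h := muNth_succ_eq_eigenvalues hA (Fin.last n)
  rw [Fin.val_last] at h
  exact h ▸ LinearMap.IsSymmetric.eigenvalues_last_mul_norm_sq_le_inner _ _ x

theorem inner_le_muNth_one_mul_norm_sq {A : Matrix (Fin (n + 1)) (Fin (n + 1)) ℝ}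
    (hA : A.IsHermitian) (x : EuclideanSpace ℝ (Fin (n + 1))) :
    ⟪toEuclideanLin A x, x⟫ ≤ muNth A 1 * ‖x‖ ^ 2 := by
  have h := muNth_succ_eq_eigenvalues hA 0
  rw [Fin.val_zero, zero_add] at h
  exact h ▸ LinearMap.IsSymmetric.inner_le_eigenvalues_zero_mul_norm_sq _ _ x

open scoped MatrixOrder in
theorem PosSemidef.exists_isSymm_mul_self_eq {A : Matrix (Fin n) (Fin n) ℝ} (hA : A.PosSemidef) :
    ∃ B : Matrix (Fin n) (Fin n) ℝ, B.IsSymm ∧ B * B = A :=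
  ⟨CFC.sqrt A, isHermitian_iff_isSymm.mp (nonneg_iff_posSemidef.mp (CFC.sqrt_nonneg A)).isHermitian,
    CFC.sqrt_mul_sqrt_self A hA.nonneg⟩

theorem muNth_last_mul_muNth_le_muNth_transpose_mul_mul {A : Matrix (Fin (m + 1)) (Fin (m + 1)) ℝ}
    (hA : A.PosSemidef) (M : Matrix (Fin (m + 1)) (Fin n) ℝ) (k : Fin n) :
    muNth A (m + 1) * muNth (Mᵀ * M) (k + 1) ≤ muNth (Mᵀ * A * M) (k + 1) := by
  have h₀ : 0 ≤ muNth A (m + 1) := by simpa using muNth_nonneg hA (Fin.last m)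
  have h₁ : (Mᵀ * M).IsHermitian := by
    simpa [conjTranspose_eq_transpose_of_trivial] using isHermitian_conjTranspose_mul_self M
  have h₂ : (Mᵀ * A * M).IsHermitian := by
    simpa [conjTranspose_eq_transpose_of_trivial] using
      isHermitian_conjTranspose_mul_mul M hA.isHermitian
  have := mul_muNth_add_le_muNth h₁ h₂ h₀ (d := 0) (fun x => by
    rw [inner_toEuclideanLin_transpose_mul_self, inner_toEuclideanLin_transpose_mul_mul,
      zero_mul, add_zero]
    exact muNth_last_mul_norm_sq_le_inner hA.isHermitian _) k
  rwa [add_zero] at this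

theorem muNth_transpose_mul_mul_le_muNth_mul_muNth_one {A : Matrix (Fin (m + 1)) (Fin (m + 1)) ℝ}
    (hA : A.PosSemidef) (M : Matrix (Fin (m + 1)) (Fin n) ℝ) (k : Fin n) (hk : (k : ℕ) < m + 1) :
    muNth (Mᵀ * A * M) (k + 1) ≤ muNth A (k + 1) * muNth (M * Mᵀ) 1 := by
  obtain ⟨C, hC, rfl⟩ := hA.exists_isSymm_mul_self_eq
  have hMM : (M * Mᵀ).PosSemidef := by
    simpa [conjTranspose_eq_transpose_of_trivial] using posSemidef_self_mul_conjTranspose M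
  have h₀ : 0 ≤ muNth (M * Mᵀ) 1 := by simpa using muNth_nonneg hMM 0
  have h₁ : (Cᵀ * (M * Mᵀ) * C).IsHermitian := by
    simpa [conjTranspose_eq_transpose_of_trivial] using
      isHermitian_conjTranspose_mul_mul C hMM.isHermitian
  have e₁ : Mᵀ * (C * C) * M = (C * M)ᵀ * (C * M) := by
    rw [transpose_mul, hC.eq]; simp only [Matrix.mul_assoc]
  have e₂ : C * M * (C * M)ᵀ = Cᵀ * (M * Mᵀ) * C := by
    rw [transpose_mul, hC.eq]; simp only [Matrix.mul_assoc]
  rw [e₁, ← muNth_mul_transpose_self (C * M) hk k.2, e₂, mul_comm]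
  have := muNth_le_mul_muNth_add hA.isHermitian h₁ h₀ (d := 0) (fun x => by
    rw [inner_toEuclideanLin_transpose_mul_mul, zero_mul, add_zero,
      show C * C = Cᵀ * C by rw [hC.eq], inner_toEuclideanLin_transpose_mul_self]
    exact inner_le_muNth_one_mul_norm_sq hMM.isHermitian _) ⟨k, hk⟩
  rwa [add_zero] at this

theorem tendsto_of_tendsto_specNorm_sub {m n : ℕ} {ι : Type*} {l : Filter ι}
    {A : ι → Matrix (Fin m) (Fin n) ℝ} {A₀ : Matrix (Fin m) (Fin n) ℝ}
    (h : Tendsto (fun i => specNorm (A i - A₀)) l (nhds 0)) : Tendsto A l (nhds A₀) :=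
  tendsto_iff_norm_sub_tendsto_zero.mpr h

theorem tendsto_muNth_mul_mul_transpose_div {r : ℕ} {A : Matrix (Fin r) (Fin r) ℝ}
    (hA : A.IsHermitian) (B : Matrix (Fin r) (Fin r) ℝ) (Lam : (n : ℕ) → Matrix (Fin n) (Fin r) ℝ)
    (hLam : Tendsto (fun n : ℕ => (n : ℝ)⁻¹ • ((Lam n)ᵀ * Lam n)) atTop (nhds A)) (k : Fin r) :
    Tendsto (fun n : ℕ => muNth (Lam n * (Bᵀ * B) * (Lam n)ᵀ) (k + 1) / n) atTop
      (nhds (muNth (B * A * Bᵀ) (k + 1))) := by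
  have hherm {X : Matrix (Fin r) (Fin r) ℝ} (hX : X.IsHermitian) : (B * X * Bᵀ).IsHermitian := by
    simpa [conjTranspose_eq_transpose_of_trivial] using isHermitian_mul_mul_conjTranspose B hX
  have hGram (n : ℕ) : ((Lam n)ᵀ * Lam n).IsHermitian := by
    simpa [conjTranspose_eq_transpose_of_trivial] using isHermitian_conjTranspose_mul_self (Lam n)
  refine (tendsto_muNth (fun n => hherm ((hGram n).smul (IsSelfAdjoint.all _))) (hherm hA)
    ((hLam.const_mul B).mul_const Bᵀ) k).congr' ?_
  filter_upwards [eventually_gt_atTop (k : ℕ)] with n hkn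
  have e₁ : Lam n * (Bᵀ * B) * (Lam n)ᵀ = Lam n * Bᵀ * (Lam n * Bᵀ)ᵀ := by
    simp only [transpose_mul, transpose_transpose, Matrix.mul_assoc]
  have e₂ : (Lam n * Bᵀ)ᵀ * (Lam n * Bᵀ) = B * ((Lam n)ᵀ * Lam n) * Bᵀ := by
    simp only [transpose_mul, transpose_transpose, Matrix.mul_assoc]
  rw [Matrix.mul_smul, Matrix.smul_mul, muNth_smul (hherm (hGram n)) (by positivity),
    e₁, muNth_mul_transpose_self _ hkn k.2, e₂, div_eq_inv_mul]

end Matrix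

/-- Lemma C.1(iv): under `ΛₙᵀΛₙ/n → Σ_Λ` positive definite and `Γ^F` positive definite,
the `j`-th largest eigenvalue of `Λₙ Γ^F Λₙᵀ` grows linearly in `n`, with
`μ_r(Σ_Λ) μ_j(Γ^F) ≤ liminf μ_j/n ≤ limsup μ_j/n ≤ μ_j(Σ_Λ) μ_1(Γ^F)`. -/
theorem common_component_eigenvalues_linear_divergence
    (r : ℕ) (hr : 1 ≤ r)
    (SigmaL GammaF : Matrix (Fin r) (Fin r) ℝ)
    (hSigmaL : SigmaL.PosDef) (hGammaF : GammaF.PosDef)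
    (Lam : (n : ℕ) → Matrix (Fin n) (Fin r) ℝ)
    (hconv : Tendsto (fun n : ℕ => specNorm ((n : ℝ)⁻¹ • ((Lam n)ᵀ * Lam n) - SigmaL))
      atTop (nhds 0)) :
    ∀ j : Fin r,
      0 < muNth SigmaL r * muNth GammaF ((j : ℕ) + 1) ∧
      muNth SigmaL r * muNth GammaF ((j : ℕ) + 1) ≤
        atTop.liminf (fun n : ℕ => muNth (Lam n * GammaF * (Lam n)ᵀ) ((j : ℕ) + 1) / n) ∧
      atTop.limsup (fun n : ℕ => muNth (Lam n * GammaF * (Lam n)ᵀ) ((j : ℕ) + 1) / n) ≤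
        muNth SigmaL ((j : ℕ) + 1) * muNth GammaF 1 := by
  intro j
  obtain ⟨r, rfl⟩ : ∃ r', r = r' + 1 := ⟨r - 1, by omega⟩
  obtain ⟨B, hB, rfl⟩ := hGammaF.posSemidef.exists_isSymm_mul_self_eq
  have hLam : Tendsto (fun n : ℕ => (n : ℝ)⁻¹ • ((Lam n)ᵀ * Lam n)) atTop (nhds SigmaL) :=
    tendsto_of_tendsto_specNorm_sub hconv
  have hlim := tendsto_muNth_mul_mul_transpose_div hSigmaL.isHermitian B Lam hLam j
  have hlow := muNth_last_mul_muNth_le_muNth_transpose_mul_mul hSigmaL.posSemidef B j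
  have hup := muNth_transpose_mul_mul_le_muNth_mul_muNth_one hSigmaL.posSemidef B j j.2
  rw [hB.eq] at hlim hlow hup
  rw [hlim.liminf_eq, hlim.limsup_eq]
  exact ⟨mul_pos (by simpa using muNth_pos hSigmaL (Fin.last r)) (muNth_pos hGammaF j), hlow, hup⟩
end

section
/- Let (Ω, 𝓕, ℙ) be a probability space, let n, T, r ≥ 1 be integers, and let F_{jt} : Ω → ℝ (j = 1,…,r; t = 1,…,T) and ξ_{it} : Ω → ℝ (i = 1,…,n; t = 1,…,T) be random variables with all fourth-order products integrable. Suppose: (a) E[ξ_{it} F_{jt} ξ_{is} F_{js}] = E[F_{jt} F_{js}] · E[ξ_{it} ξ_{is}] for all i, j, t, s; (b) |E[F_{jt} F_{js}]| ≤ M_F for all j, t, s; (c) ∑_{t=1}^T ∑_{s=1}^T |E[ξ_{it} ξ_{is}]| ≤ T · M₃ for every i. Then, writing F_t ∈ ℝ^r and ξ_t ∈ ℝⁿ for the corresponding random vectors, E[ ‖ (1/(√n · T)) ∑_{t=1}^T F_t ξ_tᵀ ‖² ] ≤ r · M_F · M₃ / T, where ‖·‖ is the spectral (operator) norm of the r ×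 n matrix. -/
/-! The spectral norm is at most the Frobenius norm, so it suffices to bound
`E[∑_{j,i} (∑_t F_{jt} ξ_{it})²] / (n T²)`. Expanding each square and factorizing the fourth
moments turns every entry into `∑_{t,s} E[F_{jt} F_{js}] E[ξ_{it} ξ_{is}] ≤ M_F · T M₃`, and
the `r n` entries give `r n M_F T M₃ / (n T²) = r M_F M₃ / T`. -/

open Matrix MeasureTheory

open Finset

lemma specNorm_sq_le_sum_sq {m n : ℕ} (A : Matrix (Fin m) (Fin n) ℝ) :
    specNorm A ^ 2 ≤ ∑ j, ∑ i, A j i ^ 2 := by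
  set S : ℝ := ∑ j, ∑ i, A j i ^ 2
  have hS : 0 ≤ S := by positivity
  have hnorm {k : ℕ} (x : EuclideanSpace ℝ (Fin k)) : ‖x‖ = √(∑ i, x i ^ 2) := by
    simp only [EuclideanSpace.norm_eq, Real.norm_eq_abs, sq_abs]
  have hop : specNorm A ≤ √S := by
    refine ContinuousLinearMap.opNorm_le_bound _ (Real.sqrt_nonneg _) fun x => ?_
    rw [LinearMap.coe_toContinuousLinearMap', hnorm, hnorm, ← Real.sqrt_mul hS]
    refine Real.sqrt_le_sqrt ?_
    calc ∑ j, (toEuclideanLin A x) j ^ 2 = ∑ j, (∑ i, A j i * x i) ^ 2 := rfl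
      _ ≤ ∑ j, (∑ i, A j i ^ 2) * ∑ i, x i ^ 2 :=
        sum_le_sum fun j _ => sum_mul_sq_le_sq_mul_sq _ _ _
      _ = S * ∑ i, x i ^ 2 := (sum_mul ..).symm
  calc specNorm A ^ 2 ≤ √S ^ 2 := pow_le_pow_left₀ (norm_nonneg _) hop 2
    _ = S := Real.sq_sqrt hS

lemma smul_sum_vecMulVec_apply {ι m n : Type*} [Fintype ι] (c : ℝ) (u : ι → m → ℝ)
    (v : ι → n → ℝ) (j : m) (i : n) :
    (c • ∑ t, vecMulVec (u t) (v t)) j i = c * ∑ t, u t j * v t i := by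
  simp only [Matrix.smul_apply, Matrix.sum_apply, vecMulVec_apply, smul_eq_mul]

lemma sum_sum_mul_le_of_abs_le {ι κ : Type*} [Fintype ι] [Fintype κ] {a b : ι → κ → ℝ}
    {M B : ℝ} (hM : 0 ≤ M) (ha : ∀ t s, |a t s| ≤ M) (hb : ∑ t, ∑ s, |b t s| ≤ B) :
    ∑ t, ∑ s, a t s * b t s ≤ M * B :=
  calc ∑ t, ∑ s, a t s * b t s ≤ ∑ t, ∑ s, M * |b t s| :=
        sum_le_sum fun t _ => sum_le_sum fun s _ =>
          (le_abs_self _).trans <| (abs_mul _ _).trans_le <|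
            mul_le_mul_of_nonneg_right (ha t s) (abs_nonneg _)
    _ = M * ∑ t, ∑ s, |b t s| := by simp only [mul_sum]
    _ ≤ M * B := mul_le_mul_of_nonneg_left hb hM

section SquareOfSum

variable {Ω ι : Type*} [Fintype ι] {X : ι → Ω → ℝ}

lemma sq_sum_eq_sum_sum_mul (ω : Ω) : (∑ t, X t ω) ^ 2 = ∑ t, ∑ s, X t ω * X s ω := by
  rw [sq, sum_mul_sum]

variable [MeasurableSpace Ω] {μ : Measure Ω}

lemma integrable_sq_sum (hX : ∀ t s, Integrable (fun ω => X t ω * X s ω) μ) :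
    Integrable (fun ω => (∑ t, X t ω) ^ 2) μ := by
  simp only [sq_sum_eq_sum_sum_mul]
  exact integrable_finsetSum _ fun t _ => integrable_finsetSum _ fun s _ => hX t s

lemma integral_sq_sum (hX : ∀ t s, Integrable (fun ω => X t ω * X s ω) μ) :
    ∫ ω, (∑ t, X t ω) ^ 2 ∂μ = ∑ t, ∑ s, ∫ ω, X t ω * X s ω ∂μ := by
  simp only [sq_sum_eq_sum_sum_mul]
  rw [integral_finsetSum _ fun t _ => integrable_finsetSum _ fun s _ => hX t s]
  exact sum_congr rfl fun t _ => integral_finsetSum _ fun s _ => hX t s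

variable {Y Z : ι → Ω → ℝ}

lemma integrable_sq_sum_mul
    (hint : ∀ t s, Integrable (fun ω => Z t ω * Y t ω * Z s ω * Y s ω) μ) :
    Integrable (fun ω => (∑ t, Y t ω * Z t ω) ^ 2) μ :=
  integrable_sq_sum fun t s => (hint t s).congr (.of_forall fun ω => by ring)

lemma integral_sq_sum_mul_le {M B : ℝ}
    (hint : ∀ t s, Integrable (fun ω => Z t ω * Y t ω * Z s ω * Y s ω) μ) (hM : 0 ≤ M)
    (hfact : ∀ t s, ∫ ω, Z t ω * Y t ω * Z s ω * Y s ω ∂μ =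
      (∫ ω, Y t ω * Y s ω ∂μ) * (∫ ω, Z t ω * Z s ω ∂μ))
    (hY : ∀ t s, |∫ ω, Y t ω * Y s ω ∂μ| ≤ M)
    (hZ : ∑ t, ∑ s, |∫ ω, Z t ω * Z s ω ∂μ| ≤ B) :
    ∫ ω, (∑ t, Y t ω * Z t ω) ^ 2 ∂μ ≤ M * B := by
  have hprod (t s) : (fun ω => Y t ω * Z t ω * (Y s ω * Z s ω)) =
      fun ω => Z t ω * Y t ω * Z s ω * Y s ω := funext fun ω => by ring
  rw [integral_sq_sum fun t s => hprod t s ▸ hint t s]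
  simp only [hprod, hfact]
  exact sum_sum_mul_le_of_abs_le hM hY hZ

end SquareOfSum

theorem factor_idiosyncratic_cross_moment_bound_general
    (Ω : Type*) [MeasurableSpace Ω] (P : Measure Ω) [IsProbabilityMeasure P]
    (n T r : ℕ) (hn : 1 ≤ n) (hT : 1 ≤ T) (hr : 1 ≤ r)
    (F : Fin r → Fin T → Ω → ℝ) (ξ : Fin n → Fin T → Ω → ℝ)
    (hint4 : ∀ (i : Fin n) (j : Fin r) (t s : Fin T),
      Integrable (fun ω => ξ i t ω * F j t ω * ξ i s ω * F j s ω) P)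
    (hfact : ∀ (i : Fin n) (j : Fin r) (t s : Fin T),
      ∫ ω, ξ i t ω * F j t ω * ξ i s ω * F j s ω ∂P =
        (∫ ω, F j t ω * F j s ω ∂P) * (∫ ω, ξ i t ω * ξ i s ω ∂P))
    (M_F : ℝ) (hMF : ∀ (j : Fin r) (t s : Fin T), |∫ ω, F j t ω * F j s ω ∂P| ≤ M_F)
    (M₃ : ℝ) (hM3 : ∀ i : Fin n, ∑ t, ∑ s, |∫ ω, ξ i t ω * ξ i s ω ∂P| ≤ (T : ℝ) * M₃) :
    ∫ ω, specNorm
        ((Real.sqrt n * T)⁻¹ • ∑ t, Matrix.vecMulVec (fun j => F j t ω) (fun i => ξ i t ω)) ^ 2 ∂P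
      ≤ (r : ℝ) * M_F * M₃ / T := by
  set c : ℝ := (√n * T)⁻¹
  have hMF0 : 0 ≤ M_F := (abs_nonneg _).trans (hMF ⟨0, hr⟩ ⟨0, hT⟩ ⟨0, hT⟩)
  have hint (j i) : Integrable (fun ω => c ^ 2 * (∑ t, F j t ω * ξ i t ω) ^ 2) P :=
    (integrable_sq_sum_mul (hint4 i j)).const_mul _
  have hpointwise (ω) :
      specNorm (c • ∑ t, vecMulVec (fun j => F j t ω) (fun i => ξ i t ω)) ^ 2 ≤
        ∑ j, ∑ i, c ^ 2 * (∑ t, F j t ω * ξ i t ω) ^ 2 :=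
    (specNorm_sq_le_sum_sq _).trans_eq (by simp only [smul_sum_vecMulVec_apply, mul_pow])
  calc _ ≤ ∫ ω, ∑ j, ∑ i, c ^ 2 * (∑ t, F j t ω * ξ i t ω) ^ 2 ∂P :=
        integral_mono_of_nonneg (.of_forall fun _ => sq_nonneg _)
          (integrable_finsetSum _ fun j _ => integrable_finsetSum _ fun i _ => hint j i)
          (.of_forall hpointwise)
    _ = c ^ 2 * ∑ j, ∑ i, ∫ ω, (∑ t, F j t ω * ξ i t ω) ^ 2 ∂P := by
        rw [integral_finsetSum _ fun j _ => integrable_finsetSum _ fun i _ => hint j i]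
        simp only [integral_finsetSum _ fun i _ => hint _ i, integral_const_mul, mul_sum]
    _ ≤ c ^ 2 * ∑ _j : Fin r, ∑ _i : Fin n, M_F * (T * M₃) := by
        gcongr with j _ i
        exact integral_sq_sum_mul_le (hint4 i j) hMF0 (hfact i j) (hMF j) (hM3 i)
    _ = r * M_F * M₃ / T := by
        have hn0 : (0 : ℝ) < n := by exact_mod_cast hn
        have hT0 : (0 : ℝ) < T := by exact_mod_cast hT
        simp only [sum_const, card_univ, Fintype.card_fin, nsmul_eq_mul, c, inv_pow, mul_pow,
          Real.sq_sqrt hn0.le]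
        field_simp

/-- Lemma C.3: under the factorization of mixed fourth moments
`E[ξ_{it} F_{jt} ξ_{is} F_{js}] = E[F_{jt}F_{js}] E[ξ_{it}ξ_{is}]`, bounded factor second
moments `|E[F_{jt}F_{js}]| ≤ M_F`, and summable idiosyncratic autocovariances
`∑_{t,s} |E[ξ_{it}ξ_{is}]| ≤ T M₃`, the cross-moment matrix satisfies
`E[‖(1/(√n T)) ∑_t F_t ξ_tᵀ‖²] ≤ r M_F M₃ / T`. -/
theorem factor_idiosyncratic_cross_moment_bound
    (Ω : Type*) [MeasurableSpace Ω] (P : Measure Ω) [IsProbabilityMeasure P]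
    (n T r : ℕ) (hn : 1 ≤ n) (hT : 1 ≤ T) (hr : 1 ≤ r)
    (F : Fin r → Fin T → Ω → ℝ) (ξ : Fin n → Fin T → Ω → ℝ)
    (hint4 : ∀ (i : Fin n) (j : Fin r) (t s : Fin T),
      Integrable (fun ω => ξ i t ω * F j t ω * ξ i s ω * F j s ω) P)
    (hintF : ∀ (j k : Fin r) (t s : Fin T), Integrable (fun ω => F j t ω * F k s ω) P)
    (hintXi : ∀ (i l : Fin n) (t s : Fin T), Integrable (fun ω => ξ i t ω * ξ l s ω) P)
    (hfact : ∀ (i : Fin n) (j : Fin r) (t s : Fin T),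
      ∫ ω, ξ i t ω * F j t ω * ξ i s ω * F j s ω ∂P =
        (∫ ω, F j t ω * F j s ω ∂P) * (∫ ω, ξ i t ω * ξ i s ω ∂P))
    (M_F : ℝ) (hMF : ∀ (j : Fin r) (t s : Fin T), |∫ ω, F j t ω * F j s ω ∂P| ≤ M_F)
    (M₃ : ℝ) (hM3 : ∀ i : Fin n, ∑ t, ∑ s, |∫ ω, ξ i t ω * ξ i s ω ∂P| ≤ (T : ℝ) * M₃) :
    ∫ ω, specNorm
        ((Real.sqrt n * T)⁻¹ • ∑ t, Matrix.vecMulVec (fun j => F j t ω) (fun i => ξ i t ω)) ^ 2 ∂P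
      ≤ (r : ℝ) * M_F * M₃ / T :=
  factor_idiosyncratic_cross_moment_bound_general Ω P n T r hn hT hr F ξ hint4 hfact M_F hMF M₃ hM3
end

section
/- Let (Ω, 𝓕, ℙ) be a probability space, let n, T ≥ 1 be integers, fix i ∈ {1,…,n}, and let ξ_{jt} : Ω → ℝ (j = 1,…,n; t = 1,…,T) be random variables with all fourth-order products integrable. Suppose: (a) for every j, E[ ( (1/T) ∑_{t=1}^T ( ξ_{it} ξ_{jt} − E[ξ_{it} ξ_{jt}] ) )² ] ≤ K / T; (b) for every t, ∑_{j=1}^n |E[ξ_{it} ξ_{jt}]| ≤ M; (c) |E[ξ_{is} ξ_{js}]| ≤ M₂ for all j and all s. Then, writing ξ_t = (ξ_{1t},…,ξ_{nt})ᵀ ∈ ℝⁿ, E[ ‖ (1/(√n · T)) ∑_{t=1}^T ξ_{it} ξ_t ‖² ] ≤ 2K/T + 2 M M₂ / n, where ‖·‖ is the Euclidean norm on ℝⁿ. -/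
/-!
Write `(1/T) ∑_t ξ_{it} ξ_{jt} = S_j + μ_j`, with `S_j` the centred time average and
`μ_j = (1/T) ∑_t E[ξ_{it} ξ_{jt}]`. Then `(S_j + μ_j)² ≤ 2 S_j² + 2 μ_j²`, the first term has
expectation at most `K/T` by (a), and `∑_j μ_j² ≤ (max_j |μ_j|) ∑_j |μ_j| ≤ M₂ M` by (c) and (b).
-/

open MeasureTheory Finset
open scoped BigOperators

theorem sum_sq_le_mul_of_abs_le {ι : Type*} (s : Finset ι) (a : ι → ℝ) {A B : ℝ} (hB : 0 ≤ B)
    (habs : ∀ j ∈ s, |a j| ≤ B) (hsum : ∑ j ∈ s, |a j| ≤ A) :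
    ∑ j ∈ s, a j ^ 2 ≤ A * B :=
  calc ∑ j ∈ s, a j ^ 2 = ∑ j ∈ s, |a j| * |a j| := by simp only [abs_mul_abs_self, sq]
    _ ≤ ∑ j ∈ s, |a j| * B := sum_le_sum fun j hj => by gcongr; exact habs j hj
    _ = (∑ j ∈ s, |a j|) * B := (sum_mul _ _ _).symm
    _ ≤ A * B := by gcongr

theorem sum_abs_expect_le {ι κ : Type*} [Fintype κ] [Nonempty κ] (s : Finset ι)
    (c : ι → κ → ℝ) {M : ℝ} (h : ∀ t, ∑ j ∈ s, |c j t| ≤ M) :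
    ∑ j ∈ s, |𝔼 t, c j t| ≤ M :=
  calc ∑ j ∈ s, |𝔼 t, c j t| ≤ ∑ j ∈ s, 𝔼 t, |c j t| := sum_le_sum fun _ _ => abs_expect_le _ _
    _ = 𝔼 t, ∑ j ∈ s, |c j t| := (expect_sum_comm _ _ _).symm
    _ ≤ M := expect_le univ_nonempty fun t _ => h t

theorem integral_sum_add_const_sq_le {Ω ι : Type*} [MeasurableSpace Ω] {P : Measure Ω}
    [IsProbabilityMeasure P] (s : Finset ι) (f : ι → Ω → ℝ) (c : ι → ℝ)
    (hf : ∀ j ∈ s, Integrable (fun ω => f j ω ^ 2) P) :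
    ∫ ω, ∑ j ∈ s, (f j ω + c j) ^ 2 ∂P
      ≤ 2 * ∑ j ∈ s, ∫ ω, f j ω ^ 2 ∂P + 2 * ∑ j ∈ s, c j ^ 2 := by
  have hterm : ∀ j ∈ s, Integrable (fun ω => 2 * f j ω ^ 2 + 2 * c j ^ 2) P :=
    fun j hj => ((hf j hj).const_mul 2).add (integrable_const _)
  calc ∫ ω, ∑ j ∈ s, (f j ω + c j) ^ 2 ∂P
      ≤ ∫ ω, ∑ j ∈ s, (2 * f j ω ^ 2 + 2 * c j ^ 2) ∂P := by
        refine integral_mono_of_nonneg (.of_forall fun ω => by positivity)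
          (integrable_finsetSum _ hterm)
          (.of_forall fun ω => sum_le_sum fun j _ => ?_)
        nlinarith [sq_nonneg (f j ω - c j)]
    _ = 2 * ∑ j ∈ s, ∫ ω, f j ω ^ 2 ∂P + 2 * ∑ j ∈ s, c j ^ 2 := by
        rw [integral_finsetSum _ hterm, mul_sum, mul_sum, ← sum_add_distrib]
        refine sum_congr rfl fun j hj => ?_
        rw [integral_add ((hf j hj).const_mul 2) (integrable_const _), integral_const_mul,
          integral_const, probReal_univ, one_smul]

theorem idiosyncratic_quadratic_cross_term_bound_general
    (Ω : Type*) [MeasurableSpace Ω] (P : Measure Ω) [IsProbabilityMeasure P]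
    (n T : ℕ) (hT : 1 ≤ T)
    (i : Fin n) (ξ : Fin n → Fin T → Ω → ℝ)
    (K : ℝ)
    (ha : ∀ j : Fin n,
      ∫ ω, ((T : ℝ)⁻¹ * ∑ t, (ξ i t ω * ξ j t ω - ∫ ω', ξ i t ω' * ξ j t ω' ∂P)) ^ 2 ∂P
        ≤ K / T)
    (hintSq : ∀ j : Fin n,
      Integrable (fun ω =>
        ((T : ℝ)⁻¹ * ∑ t, (ξ i t ω * ξ j t ω - ∫ ω', ξ i t ω' * ξ j t ω' ∂P)) ^ 2) P)
    (M : ℝ) (hb : ∀ t : Fin T, ∑ j, |∫ ω, ξ i t ω * ξ j t ω ∂P| ≤ M)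
    (M₂ : ℝ) (hc : ∀ (j : Fin n) (s : Fin T), |∫ ω, ξ i s ω * ξ j s ω ∂P| ≤ M₂) :
    ∫ ω, ∑ j, ((Real.sqrt n * T)⁻¹ * ∑ t, ξ i t ω * ξ j t ω) ^ 2 ∂P
      ≤ 2 * K / T + 2 * M * M₂ / n := by
  have : Nonempty (Fin T) := ⟨⟨0, hT⟩⟩
  set c : Fin n → Fin T → ℝ := fun j t => ∫ ω, ξ i t ω * ξ j t ω ∂P
  set S : Fin n → Ω → ℝ := fun j ω => (T : ℝ)⁻¹ * ∑ t, (ξ i t ω * ξ j t ω - c j t)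
  have hdecomp : ∀ ω, ∑ j, ((Real.sqrt n * T)⁻¹ * ∑ t, ξ i t ω * ξ j t ω) ^ 2
      = (n : ℝ)⁻¹ * ∑ j, (S j ω + 𝔼 t, c j t) ^ 2 := by
    intro ω
    rw [mul_sum]
    refine sum_congr rfl fun j _ => ?_
    simp only [S, Fintype.expect_eq_sum_div_card, Fintype.card_fin, sum_sub_distrib]
    rw [mul_inv, mul_pow, mul_pow, inv_pow √_, Real.sq_sqrt n.cast_nonneg]
    ring
  have hS : ∑ j, ∫ ω, S j ω ^ 2 ∂P ≤ n * (K / T) := by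
    calc ∑ j, ∫ ω, S j ω ^ 2 ∂P ≤ ∑ _j : Fin n, K / T := sum_le_sum fun j _ => ha j
      _ = n * (K / T) := by simp
  have hμ : ∑ j, (𝔼 t, c j t) ^ 2 ≤ M * M₂ :=
    sum_sq_le_mul_of_abs_le _ _ ((abs_nonneg _).trans (hc i ⟨0, hT⟩))
      (fun j _ => (abs_expect_le _ _).trans (expect_le univ_nonempty fun t _ => hc j t))
      (sum_abs_expect_le _ _ hb)
  have hn_ne : (n : ℝ) ≠ 0 := Nat.cast_ne_zero.2 (Fin.pos i).ne'
  calc ∫ ω, ∑ j, ((Real.sqrt n * T)⁻¹ * ∑ t, ξ i t ω * ξ j t ω) ^ 2 ∂P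
      = (n : ℝ)⁻¹ * ∫ ω, ∑ j, (S j ω + 𝔼 t, c j t) ^ 2 ∂P := by
        simp only [hdecomp, integral_const_mul]
    _ ≤ (n : ℝ)⁻¹ * (2 * (n * (K / T)) + 2 * (M * M₂)) := by
        gcongr
        exact (integral_sum_add_const_sq_le _ S _ fun j _ => hintSq j).trans (by linarith)
    _ = 2 * K / T + 2 * M * M₂ / n := by field_simp

/-- Equations (A.1f2)–(A.1f3) in the proof of Proposition B.3(f): for a fixed series `i`,
under the fourth-cumulant bound `E[((1/T) ∑_t (ξ_{it}ξ_{jt} - E[ξ_{it}ξ_{jt}]))²] ≤ K/T`,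
the cross-sectional covariance summability `∑_j |E[ξ_{it}ξ_{jt}]| ≤ M` for every `t`,
and the uniform covariance bound `|E[ξ_{is}ξ_{js}]| ≤ M₂`, the quadratic idiosyncratic
cross term satisfies `E[‖(1/(√n T)) ∑_t ξ_{it} ξ_t‖²] ≤ 2K/T + 2 M M₂ / n`
(Euclidean norm on ℝⁿ). -/
theorem idiosyncratic_quadratic_cross_term_bound
    (Ω : Type*) [MeasurableSpace Ω] (P : Measure Ω) [IsProbabilityMeasure P]
    (n T : ℕ) (hn : 1 ≤ n) (hT : 1 ≤ T)
    (i : Fin n) (ξ : Fin n → Fin T → Ω → ℝ)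
    (hint2 : ∀ (j : Fin n) (t s : Fin T), Integrable (fun ω => ξ i t ω * ξ j s ω) P)
    (hint4 : ∀ (j : Fin n) (t s : Fin T),
      Integrable (fun ω => ξ i t ω * ξ j t ω * ξ i s ω * ξ j s ω) P)
    (K : ℝ)
    (ha : ∀ j : Fin n,
      ∫ ω, ((T : ℝ)⁻¹ * ∑ t, (ξ i t ω * ξ j t ω - ∫ ω', ξ i t ω' * ξ j t ω' ∂P)) ^ 2 ∂P
        ≤ K / T)
    (hintSq : ∀ j : Fin n,
      Integrable (fun ω =>
        ((T : ℝ)⁻¹ * ∑ t, (ξ i t ω * ξ j t ω - ∫ ω', ξ i t ω' * ξ j t ω' ∂P)) ^ 2) P)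
    (M : ℝ) (hb : ∀ t : Fin T, ∑ j, |∫ ω, ξ i t ω * ξ j t ω ∂P| ≤ M)
    (M₂ : ℝ) (hc : ∀ (j : Fin n) (s : Fin T), |∫ ω, ξ i s ω * ξ j s ω ∂P| ≤ M₂) :
    ∫ ω, ∑ j, ((Real.sqrt n * T)⁻¹ * ∑ t, ξ i t ω * ξ j t ω) ^ 2 ∂P
      ≤ 2 * K / T + 2 * M * M₂ / n :=
  idiosyncratic_quadratic_cross_term_bound_general Ω P n T hT i ξ K ha hintSq M hb M₂ hc
end
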